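/- Let 0 < q < 1, let t > 0 be a real number, and let k, ν be natural numbers with 1 ≤ k ≤ ν. Define F(y) = Σ_{r=k}^{ν} q^{-r(ν-r)} [ν choose r]_q (y/t)^r ∏_{i=1}^{ν-r} (1 − y/(q^{i-1} t)). Then for every real y ≠ 0, the q-derivative (F(y) − F(qy))/((1−q)y) equals q^{-k(ν-k)} · ([ν]_q! / ([k−1]_q! [ν−k]_q!)) · (y^{k-1}/t^k) · ∏_{i=1}^{ν-k} (1 − y/(q^{i-1} t)). -/

import Mathlib

/-- The `q`-number `[m]_q = (1 - q^m)/(1 - q)`. -/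
noncomputable def qnum (q : ℝ) (m : ℕ) : ℝ := (1 - q ^ m) / (1 - q)

/-- The `q`-factorial `[n]_q! = [1]_q [2]_q ⋯ [n]_q`. -/
noncomputable def qfact (q : ℝ) (n : ℕ) : ℝ := ∏ i ∈ Finset.range n, qnum q (i + 1)

/-- The `q`-binomial coefficient `[n choose k]_q = [n]_q! / ([k]_q! [n-k]_q!)`. -/
noncomputable def qbinom (q : ℝ) (n k : ℕ) : ℝ := qfact q n / (qfact q k * qfact q (n - k))

/-!
Write `F = Σ_{r=k}^{ν} T_r` and let `d_r` be the density with `k` replaced by `r`. Removing the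
last factor of `∏_{i<n+1} (1 - y/(q^i t))` and shifting the index after `y ↦ qy` give a
`q`-Leibniz rule for `(y/t)^r ∏_{i<ν-r} (1 - y/(q^i t))`, and with the `q`-binomial identities
`[ν choose r]_q [r]_q = [ν]_q!/([r-1]_q! [ν-r]_q!)` and
`[ν choose r]_q [ν-r]_q = [ν]_q!/([r]_q! [ν-r-1]_q!)` it reads `D_q T_r = d_r - d_{r+1}` for
`r < ν`, while `D_q T_ν = d_ν`. The sum telescopes to `d_k`.
-/

open Finset

section QNumbers

variable {q : ℝ}

lemma qnum_mul_one_sub (hq1 : q ≠ 1) (n : ℕ) : qnum q n * (1 - q) = 1 - q ^ n :=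
  div_mul_cancel₀ _ (sub_ne_zero.2 hq1.symm)

lemma qnum_succ_ne_zero (hq0 : 0 < q) (hq1 : q ≠ 1) (n : ℕ) : qnum q (n + 1) ≠ 0 := by
  refine div_ne_zero (sub_ne_zero.2 fun h => hq1 ?_) (sub_ne_zero.2 hq1.symm)
  exact (pow_eq_one_iff_of_nonneg hq0.le n.succ_ne_zero).1 h.symm

lemma qfact_succ (n : ℕ) : qfact q (n + 1) = qfact q n * qnum q (n + 1) :=
  prod_range_succ _ _

lemma qbinom_succ_mul_qnum (hq0 : 0 < q) (hq1 : q ≠ 1) (n k : ℕ) :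
    qbinom q n (k + 1) * qnum q (k + 1) = qfact q n / (qfact q k * qfact q (n - (k + 1))) := by
  have := qnum_succ_ne_zero hq0 hq1 k
  rw [qbinom, qfact_succ]
  field_simp

lemma qbinom_mul_qnum_succ (hq0 : 0 < q) (hq1 : q ≠ 1) (k m : ℕ) :
    qbinom q (k + m + 1) k * qnum q (m + 1) = qfact q (k + m + 1) / (qfact q k * qfact q m) := by
  have := qnum_succ_ne_zero hq0 hq1 m
  rw [qbinom, show k + m + 1 - k = m + 1 by omega, qfact_succ m]
  field_simp

end QNumbers

section QOrderStatistic

variable (q t : ℝ) (ν : ℕ)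

noncomputable def qOrderCDFTerm (r : ℕ) (y : ℝ) : ℝ :=
  q ^ (-((r : ℤ) * ((ν : ℤ) - (r : ℤ)))) * qbinom q ν r * (y / t) ^ r
    * ∏ i ∈ range (ν - r), (1 - y / (q ^ i * t))

noncomputable def qBetaDensity (r : ℕ) (y : ℝ) : ℝ :=
  q ^ (-((r : ℤ) * ((ν : ℤ) - (r : ℤ)))) * (qfact q ν / (qfact q (r - 1) * qfact q (ν - r)))
    * (y ^ (r - 1) / t ^ r) * ∏ i ∈ range (ν - r), (1 - y / (q ^ i * t))

variable {q t ν}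

lemma prod_range_succ_one_sub_mul_div (hq : q ≠ 0) (y : ℝ) (n : ℕ) :
    ∏ i ∈ range (n + 1), (1 - q * y / (q ^ i * t))
      = (1 - q * y / t) * ∏ i ∈ range n, (1 - y / (q ^ i * t)) := by
  rw [prod_range_succ', pow_zero, one_mul, mul_comm]
  congr 1
  refine prod_congr rfl fun i _ => ?_
  rw [pow_succ]
  field_simp

lemma div_pow_mul_prod_sub (hq : q ≠ 0) (ht : t ≠ 0) (y : ℝ) (r m : ℕ) :
    (y / t) ^ r * ∏ i ∈ range (m + 1), (1 - y / (q ^ i * t))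
        - (q * y / t) ^ r * ∏ i ∈ range (m + 1), (1 - q * y / (q ^ i * t))
      = (1 - q ^ r) * (y / t) ^ r * ∏ i ∈ range (m + 1), (1 - y / (q ^ i * t))
        - q ^ r / q ^ m * (1 - q ^ (m + 1)) * (y / t) ^ (r + 1)
          * ∏ i ∈ range m, (1 - y / (q ^ i * t)) := by
  rw [prod_range_succ_one_sub_mul_div hq, prod_range_succ]
  generalize ∏ i ∈ range m, (1 - y / (q ^ i * t)) = P
  rw [div_pow, div_pow, div_pow, mul_pow]
  field_simp
  ring

lemma zpow_neg_mul_sub_succ (hq : q ≠ 0) (r m : ℕ) :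
    q ^ (-((r : ℤ) * (((r + m + 1 : ℕ) : ℤ) - (r : ℤ)))) * (q ^ r / q ^ m)
      = q ^ (-(((r + 1 : ℕ) : ℤ) * (((r + m + 1 : ℕ) : ℤ) - ((r + 1 : ℕ) : ℤ)))) := by
  rw [← zpow_natCast, ← zpow_natCast, ← zpow_sub₀ hq, ← zpow_add₀ hq]
  congr 1
  push_cast
  ring

lemma qOrderCDFTerm_sub_of_lt (hq0 : 0 < q) (hq1 : q ≠ 1) (ht : t ≠ 0) {r : ℕ} (hr : 1 ≤ r)
    (hrν : r < ν) (y : ℝ) :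
    qOrderCDFTerm q t ν r y - qOrderCDFTerm q t ν r (q * y)
      = (1 - q) * y * (qBetaDensity q t ν r y - qBetaDensity q t ν (r + 1) y) := by
  obtain ⟨s, rfl⟩ : ∃ s, r = s + 1 := ⟨r - 1, by omega⟩
  obtain ⟨m, rfl⟩ : ∃ m, ν = s + 1 + m + 1 := ⟨ν - s - 2, by omega⟩
  have hleft := qbinom_succ_mul_qnum hq0 hq1 (s + 1 + m + 1) s
  have hright := qbinom_mul_qnum_succ hq0 hq1 (s + 1) m
  have hexp := zpow_neg_mul_sub_succ hq0.ne' (s + 1) m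
  have hΔ := div_pow_mul_prod_sub hq0.ne' ht y (s + 1) m
  simp only [qOrderCDFTerm, qBetaDensity, show s + 1 + m + 1 - (s + 1) = m + 1 by omega,
    show s + 1 + m + 1 - (s + 1 + 1) = m by omega, Nat.add_sub_cancel] at hleft hexp ⊢
  rw [← hleft, ← hright, ← hexp]
  set c := q ^ (-(((s + 1 : ℕ) : ℤ) * (((s + 1 + m + 1 : ℕ) : ℤ) - ((s + 1 : ℕ) : ℤ))))
  set B := qbinom q (s + 1 + m + 1) (s + 1)
  linear_combination c * B * hΔ
    - c * B * (y / t) ^ (s + 1) * (∏ i ∈ range (m + 1), (1 - y / (q ^ i * t)))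
      * qnum_mul_one_sub hq1 (s + 1)
    + c * B * (q ^ (s + 1) / q ^ m) * (y / t) ^ (s + 2) * (∏ i ∈ range m, (1 - y / (q ^ i * t)))
      * qnum_mul_one_sub hq1 (m + 1)

lemma qOrderCDFTerm_self_sub (hq0 : 0 < q) (hq1 : q ≠ 1) (hν : 1 ≤ ν) (y : ℝ) :
    qOrderCDFTerm q t ν ν y - qOrderCDFTerm q t ν ν (q * y)
      = (1 - q) * y * qBetaDensity q t ν ν y := by
  obtain ⟨n, rfl⟩ : ∃ n, ν = n + 1 := ⟨ν - 1, by omega⟩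
  have hleft := qbinom_succ_mul_qnum hq0 hq1 (n + 1) n
  simp only [qOrderCDFTerm, qBetaDensity, Nat.sub_self, sub_self, mul_zero, neg_zero, zpow_zero,
    range_zero, prod_empty, mul_one, one_mul, Nat.add_sub_cancel] at hleft ⊢
  rw [← hleft]
  linear_combination -qbinom q (n + 1) (n + 1) * (y / t) ^ (n + 1) * qnum_mul_one_sub hq1 (n + 1)

lemma sum_Icc_qOrderCDFTerm_sub (hq0 : 0 < q) (hq1 : q ≠ 1) (ht : t ≠ 0) {k : ℕ} (hk : 1 ≤ k)
    (hkν : k ≤ ν) (y : ℝ) :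
    ∑ r ∈ Icc k ν, (qOrderCDFTerm q t ν r y - qOrderCDFTerm q t ν r (q * y))
      = (1 - q) * y * qBetaDensity q t ν k y := by
  induction hkν using Nat.decreasingInduction with
  | self => rw [Icc_self, sum_singleton, qOrderCDFTerm_self_sub hq0 hq1 hk]
  | of_succ j hj ih =>
    rw [← insert_Icc_add_one_left_eq_Icc hj.le, sum_insert (by simp), ih (by omega),
      qOrderCDFTerm_sub_of_lt hq0 hq1 ht hk hj]
    ring

end QOrderStatistic

/-- The `q`-derivative of the `q`-distribution function
`F(y) = Σ_{r=k}^{ν} q^{-r(ν-r)} [ν choose r]_q (y/t)^r ∏_{i=1}^{ν-r} (1 − y/(q^{i-1} t))`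
of the `k`-th `q`-order statistic equals the `q`-density
`q^{-k(ν-k)} ([ν]_q!/([k−1]_q![ν−k]_q!)) (y^{k-1}/t^k) ∏_{i=1}^{ν-k} (1 − y/(q^{i-1} t))`. -/
theorem stmt12 (q t : ℝ) (hq0 : 0 < q) (hq1 : q < 1) (ht : 0 < t) (k ν : ℕ)
    (hk : 1 ≤ k) (hkν : k ≤ ν)
    (F : ℝ → ℝ)
    (hF : ∀ y : ℝ, F y = ∑ r ∈ Finset.Icc k ν,
        q ^ (-((r : ℤ) * ((ν : ℤ) - (r : ℤ)))) * qbinom q ν r * (y / t) ^ r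
          * ∏ i ∈ Finset.range (ν - r), (1 - y / (q ^ i * t)))
    (y : ℝ) (hy : y ≠ 0) :
    (F y - F (q * y)) / ((1 - q) * y)
      = q ^ (-((k : ℤ) * ((ν : ℤ) - (k : ℤ))))
          * (qfact q ν / (qfact q (k - 1) * qfact q (ν - k)))
          * (y ^ (k - 1) / t ^ k)
          * ∏ i ∈ Finset.range (ν - k), (1 - y / (q ^ i * t)) := by
  have hF' : ∀ y, F y = ∑ r ∈ Icc k ν, qOrderCDFTerm q t ν r y := hF
  rw [hF', hF', ← sum_sub_distrib, sum_Icc_qOrderCDFTerm_sub hq0 hq1.ne ht.ne' hk hkν,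
    mul_div_cancel_left₀ _ (mul_ne_zero (sub_ne_zero.2 hq1.ne') hy)]
  rfl
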